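/- arXiv:2409.19218 — 6 statements merged into one kernel-verified Lean document; each statement's English description precedes it below -/
import Mathlib

section
/- For k ≥ 1, let S_1, ..., S_{k+1} be k+1 finite sets each of size at least m. Then |S_1 ∪ ... ∪ S_{k+1}| + |S_1 ∩ ... ∩ S_{k+1}| ≥ ((k+1)/k) · m. -/
/-- For `k ≥ 1`, given `k+1` finite sets each of size at least `m`, the sum of the sizes
of their union and their intersection is at least `((k+1)/k) * m`. -/
theorem union_plus_intersection_card_lb {α : Type*} [DecidableEq α]
    (k m : ℕ) (hk : 1 ≤ k) (S : Fin (k + 1) → Finset α)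
    (hS : ∀ i, m ≤ (S i).card) :
    (((k : ℝ) + 1) / k) * m ≤
      ((Finset.univ.sup S).card : ℝ) +
        ((Finset.inf' Finset.univ Finset.univ_nonempty S).card : ℝ) := by
  classical
  set U := Finset.univ.sup S with hU
  set I := Finset.inf' Finset.univ Finset.univ_nonempty S with hI
  have hsub : ∀ i, S i ⊆ U := fun i => Finset.le_sup (Finset.mem_univ i)
  have key : (k + 1) * m ≤ k * U.card + I.card := by
    calc (k + 1) * m ≤ ∑ i : Fin (k+1), (S i).card := by
          have h := Finset.sum_le_sum (fun i (_ : i ∈ Finset.univ) => hS i)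
          simpa [Finset.sum_const, Finset.card_univ, mul_comm] using h
      _ = ∑ i : Fin (k+1), ∑ x ∈ U, (if x ∈ S i then 1 else 0) := by
          refine Finset.sum_congr rfl fun i _ => ?_
          rw [← Finset.card_filter]
          congr 1
          ext x
          simp only [Finset.mem_filter]
          exact ⟨fun h => ⟨hsub i h, h⟩, fun h => h.2⟩
      _ = ∑ x ∈ U, ∑ i : Fin (k+1), (if x ∈ S i then 1 else 0) :=
          Finset.sum_comm
      _ ≤ ∑ x ∈ U, (k + if x ∈ I then 1 else 0) := by
          refine Finset.sum_le_sum fun x hx => ?_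
          have hdeg : ∑ i : Fin (k+1), (if x ∈ S i then 1 else 0)
              = (Finset.univ.filter (fun i => x ∈ S i)).card := by
            simp [← Finset.card_filter]
          rw [hdeg]
          by_cases hxI : x ∈ I
          · simp only [hxI, if_true]
            have : (Finset.univ.filter (fun i : Fin (k+1) => x ∈ S i)).card ≤
                Finset.univ.card := Finset.card_filter_le _ _
            simpa [Finset.card_univ] using this
          · simp only [hxI, if_false, add_zero]
            have hne : ∃ i : Fin (k+1), x ∉ S i := by
              by_contra h
              push_neg at h
              exact hxI ((Finset.mem_inf' _).mpr fun i _ => h i)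
            obtain ⟨i₀, hi₀⟩ := hne
            have hss : (Finset.univ.filter (fun i : Fin (k+1) => x ∈ S i)) ⊂
                Finset.univ := by
              refine Finset.ssubset_iff_of_subset (Finset.filter_subset _ _) |>.mpr ?_
              exact ⟨i₀, Finset.mem_univ _, by simp [hi₀]⟩
            have := Finset.card_lt_card hss
            simp only [Finset.card_univ, Fintype.card_fin] at this
            omega
      _ = k * U.card + I.card := by
          rw [Finset.sum_add_distrib, Finset.sum_const, smul_eq_mul, mul_comm]
          congr 1
          rw [← Finset.card_filter]
          congr 1
          have hIU : I ⊆ U := by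
            intro x hx
            exact hsub 0 (Finset.inf'_le S (Finset.mem_univ (0 : Fin (k+1))) hx)
          ext x
          simp only [Finset.mem_filter]
          exact ⟨fun h => h.2, fun h => ⟨hIU h, h⟩⟩
  have hk' : (0 : ℝ) < k := by exact_mod_cast hk
  rw [div_mul_eq_mul_div, div_le_iff₀ hk']
  have key' : ((k : ℝ) + 1) * m ≤ k * U.card + I.card := by exact_mod_cast key
  have hI' : (I.card : ℝ) ≤ k * I.card := by
    nlinarith [Nat.cast_nonneg (α := ℝ) I.card, (by exact_mod_cast hk : (1:ℝ) ≤ k)]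
  nlinarith
end

section
/- For k ≥ 1, let A_1, ..., A_{k+1} be events in a probability space with P(A_i) > c for all i. Then P(A_1 ∪ ... ∪ A_{k+1}) + P(A_1 ∩ ... ∩ A_{k+1}) > ((k+1)/k) · c. -/
open MeasureTheory

/-- For `k ≥ 1`, events `A_1, ..., A_{k+1}` in a probability space with `P(A_i) > c` for all
`i` satisfy `P(⋃ A_i) + P(⋂ A_i) > ((k+1)/k) * c`. -/
theorem union_plus_intersection_prob_lb {Ω : Type*} [MeasurableSpace Ω]
    (P : Measure Ω) [IsProbabilityMeasure P]
    (k : ℕ) (hk : 1 ≤ k) (A : Fin (k + 1) → Set Ω)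
    (hA : ∀ i, MeasurableSet (A i))
    (c : ℝ) (hc : 0 ≤ c)
    (hlb : ∀ i, c < (P (A i)).toReal) :
    (((k : ℝ) + 1) / k) * c < (P (⋃ i, A i)).toReal + (P (⋂ i, A i)).toReal := by
  set U := ⋃ i, A i with hUdef
  set I := ⋂ i, A i with hIdef
  have hsub : ∀ i, A i ⊆ U := fun i => Set.subset_iUnion A i
  have hIsub : I ⊆ U := (Set.iInter_subset A 0).trans (hsub 0)
  have hImeas : MeasurableSet I := MeasurableSet.iInter fun i => hA i
  have hfin : ∀ s : Set Ω, P s ≠ ⊤ := fun s => measure_ne_top P s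
  -- key set identity
  have key : U \ I = ⋃ i, U \ A i := by
    rw [hIdef, Set.diff_iInter]
  have h1 : P (U \ I) ≤ ∑ i, P (U \ A i) := by
    rw [key]; exact measure_iUnion_fintype_le _ _
  -- convert to reals
  have hdiffI : (P (U \ I)).toReal = (P U).toReal - (P I).toReal := by
    rw [measure_diff hIsub hImeas.nullMeasurableSet (hfin I),
      ENNReal.toReal_sub_of_le (measure_mono hIsub) (hfin U)]
  have hdiffA : ∀ i, (P (U \ A i)).toReal = (P U).toReal - (P (A i)).toReal := by
    intro i
    rw [measure_diff (hsub i) (hA i).nullMeasurableSet (hfin (A i)),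
      ENNReal.toReal_sub_of_le (measure_mono (hsub i)) (hfin U)]
  have h1' : (P U).toReal - (P I).toReal ≤ ∑ i, ((P U).toReal - (P (A i)).toReal) := by
    rw [← hdiffI]
    calc (P (U \ I)).toReal ≤ (∑ i, P (U \ A i)).toReal :=
          ENNReal.toReal_mono (by simp [hfin]) h1
      _ = ∑ i, (P (U \ A i)).toReal := ENNReal.toReal_sum (fun i _ => hfin _)
      _ = ∑ i, ((P U).toReal - (P (A i)).toReal) := by simp_rw [hdiffA]
  have hsumlb : ((k : ℝ) + 1) * c < ∑ i, (P (A i)).toReal := by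
    have : ∑ _i : Fin (k + 1), c < ∑ i, (P (A i)).toReal :=
      Finset.sum_lt_sum_of_nonempty ⟨0, Finset.mem_univ 0⟩ (fun i _ => hlb i)
    simpa using this
  have hsumsimp : ∑ i : Fin (k + 1), ((P U).toReal - (P (A i)).toReal)
      = ((k : ℝ) + 1) * (P U).toReal - ∑ i, (P (A i)).toReal := by
    rw [Finset.sum_sub_distrib]
    simp [mul_comm]
  rw [hsumsimp] at h1'
  have hkey : ((k : ℝ) + 1) * c < (k : ℝ) * (P U).toReal + (P I).toReal := by linarith
  have hInn : 0 ≤ (P I).toReal := ENNReal.toReal_nonneg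
  have hk1 : (1 : ℝ) ≤ (k : ℝ) := by exact_mod_cast hk
  have hkpos : (0 : ℝ) < k := by linarith
  rw [div_mul_eq_mul_div, div_lt_iff₀ hkpos]
  nlinarith [hkey, hInn, hk1]
end

section
/- For k ≥ 1, let A_1, ..., A_{k+1} be events in a probability space with P(A_i) > c for all i, and suppose the common intersection A_1 ∩ ... ∩ A_{k+1} is empty. Then P(A_1 ∪ ... ∪ A_{k+1}) > ((k+1)/k) · c. -/
open MeasureTheory ENNReal

/-- For `k ≥ 1`, events `A_1, ..., A_{k+1}` in a probability space with `P(A_i) > c` for all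
`i` and empty common intersection satisfy `P(⋃ A_i) > ((k+1)/k) * c`. -/
theorem union_prob_lb_of_empty_intersection {Ω : Type*} [MeasurableSpace Ω]
    (P : Measure Ω) [IsProbabilityMeasure P]
    (k : ℕ) (hk : 1 ≤ k) (A : Fin (k + 1) → Set Ω)
    (hA : ∀ i, MeasurableSet (A i))
    (hempty : (⋂ i, A i) = ∅)
    (c : ℝ) (hc : 0 ≤ c)
    (hlb : ∀ i, c < (P (A i)).toReal) :
    (((k : ℝ) + 1) / k) * c < (P (⋃ i, A i)).toReal := by
  classical
  have hmU : MeasurableSet (⋃ i, A i) := MeasurableSet.iUnion hA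
  have key : ∑ i, P (A i) ≤ (k : ℝ≥0∞) * P (⋃ i, A i) := by
    have h1 : ∑ i, P (A i) = ∫⁻ ω, ∑ i, (A i).indicator (fun _ => (1:ℝ≥0∞)) ω ∂P := by
      rw [MeasureTheory.lintegral_finset_sum]
      · simp [MeasureTheory.lintegral_indicator (hA _)]
      · exact fun i _ => measurable_one.indicator (hA i)
    have h2 : (k : ℝ≥0∞) * P (⋃ i, A i)
        = ∫⁻ ω, (⋃ i, A i).indicator (fun _ => (k:ℝ≥0∞)) ω ∂P := by
      rw [MeasureTheory.lintegral_indicator hmU]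
      simp [mul_comm]
    rw [h1, h2]
    apply lintegral_mono
    intro ω
    by_cases hω : ω ∈ ⋃ i, A i
    · have hne : ∃ j, ω ∉ A j := by
        by_contra h
        push_neg at h
        have : ω ∈ ⋂ i, A i := Set.mem_iInter.mpr h
        rw [hempty] at this; exact this
      obtain ⟨j, hj⟩ := hne
      calc ∑ i, (A i).indicator (fun _ => (1:ℝ≥0∞)) ω
          ≤ ∑ _i ∈ Finset.univ.erase j, (1:ℝ≥0∞) := by
            rw [← Finset.sum_erase (f := fun i => (A i).indicator (fun _ => (1:ℝ≥0∞)) ω) Finset.univ (Set.indicator_of_notMem hj _)]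
            exact Finset.sum_le_sum fun i _ => by
              by_cases h : ω ∈ A i <;> simp [h]
        _ = (k : ℝ≥0∞) := by
            simp [Finset.card_erase_of_mem (Finset.mem_univ j)]
        _ = (⋃ i, A i).indicator (fun _ => (k:ℝ≥0∞)) ω := by simp [hω]
    · have h0 : ∀ i, ω ∉ A i := fun i hi => hω (Set.mem_iUnion.mpr ⟨i, hi⟩)
      simp [Set.indicator_of_notMem, hω, h0]
  -- pass to real numbers
  have hfin : ∀ i, P (A i) ≠ ⊤ := fun i => measure_ne_top P _
  have keyR : ∑ i, (P (A i)).toReal ≤ (k : ℝ) * (P (⋃ i, A i)).toReal := by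
    have := ENNReal.toReal_mono (by
      exact ENNReal.mul_ne_top (by simp) (measure_ne_top P _)) key
    rwa [ENNReal.toReal_sum (fun i _ => hfin i), ENNReal.toReal_mul,
      ENNReal.toReal_natCast] at this
  have hsum : ((k : ℝ) + 1) * c < ∑ i, (P (A i)).toReal := by
    have : ∑ _i : Fin (k+1), c < ∑ i, (P (A i)).toReal :=
      Finset.sum_lt_sum_of_nonempty Finset.univ_nonempty fun i _ => hlb i
    simpa [Finset.card_univ, mul_comm, add_comm] using this
  have hkpos : (0:ℝ) < k := by exact_mod_cast hk
  rw [div_mul_eq_mul_div, div_lt_iff₀ hkpos]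
  calc ((k:ℝ) + 1) * c < ∑ i, (P (A i)).toReal := hsum
    _ ≤ (k : ℝ) * (P (⋃ i, A i)).toReal := keyR
    _ = (P (⋃ i, A i)).toReal * k := mul_comm _ _
end

section
/- Let c_1 < c_2 < ... < c_{k+1} be real numbers in [0,1] pairwise separated by more than 3γ, where γ ∈ (0,1). Define τ_i = γ·⌊(c_i + c_{i+1})/(2γ)⌋ for i ∈ [k]. Then τ = (τ_1, ..., τ_k) is strictly increasing, and for every i ∈ [k+1], each component of τ is at distance at least γ/2 from c_i; moreover f(c_i, τ) = i − 1 where f(a,τ) = |{j : a > τ_j}|. -/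
lemma aux_card_lt (k m : ℕ) (hm : m ≤ k) :
    (Finset.univ.filter (fun j : Fin k => (j : ℕ) < m)).card = m := by
  have : (Finset.univ.filter (fun j : Fin k => (j : ℕ) < m)) =
      (Finset.univ : Finset (Fin m)).map (Fin.castLEEmb hm) := by
    ext j
    simp only [Finset.mem_filter, Finset.mem_univ, true_and, Finset.mem_map, Fin.castLEEmb]
    constructor
    · intro h; exact ⟨⟨j, h⟩, rfl⟩
    · rintro ⟨x, rfl⟩; exact x.2
  rw [this, Finset.card_map, Finset.card_univ, Fintype.card_fin]

/-- Midpoint-rounding construction: given `c_1 < ... < c_{k+1}` in `[0,1]` pairwise separated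
by more than `3γ`, the thresholds `τ_i = γ⌊(c_i + c_{i+1})/(2γ)⌋` form a strictly increasing
`k`-tuple, each `c_i` is at distance at least `γ/2` from every threshold, and
`f(c_i, τ) = |{j : c_i > τ_j}| = i - 1`. -/
theorem midpoint_rounding_thresholds (γ : ℝ) (hγ0 : 0 < γ) (hγ1 : γ < 1)
    (k : ℕ) (hk : 1 ≤ k) (c : Fin (k + 1) → ℝ)
    (hc : ∀ i, c i ∈ Set.Icc (0 : ℝ) 1) (hmono : StrictMono c)
    (hsep : ∀ i j, i ≠ j → 3 * γ < |c i - c j|)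
    (τ : Fin k → ℝ)
    (hτ : ∀ i : Fin k, τ i = γ * (⌊(c i.castSucc + c i.succ) / (2 * γ)⌋ : ℤ)) :
    StrictMono τ ∧
    (∀ i : Fin (k + 1), ∀ j : Fin k, γ / 2 ≤ |c i - τ j|) ∧
    (∀ i : Fin (k + 1),
      (Finset.univ.filter (fun j : Fin k => τ j < c i)).card = (i : ℕ)) := by
  have key : ∀ j : Fin k, c j.castSucc + γ / 2 < τ j ∧ τ j + γ / 2 < c j.succ := by
    intro j
    have hlt : j.castSucc < j.succ := Fin.castSucc_lt_succ
    have hab : c j.castSucc < c j.succ := hmono hlt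
    have hsep' : 3 * γ < c j.succ - c j.castSucc := by
      have h := hsep j.succ j.castSucc (ne_of_gt hlt)
      rwa [abs_of_pos (by linarith)] at h
    set a := c j.castSucc with ha
    set b := c j.succ with hb
    have h2γ : (0:ℝ) < 2 * γ := by linarith
    set t : ℝ := ((⌊(a + b) / (2 * γ)⌋ : ℤ) : ℝ) with ht
    have hfl1 : t ≤ (a + b) / (2 * γ) := Int.floor_le _
    have hfl2 : (a + b) / (2 * γ) - 1 < t := Int.sub_one_lt_floor _
    have h1 : t * (2 * γ) ≤ a + b := (le_div_iff₀ h2γ).mp hfl1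
    have h2 : a + b < (t + 1) * (2 * γ) := (div_lt_iff₀ h2γ).mp (by linarith)
    rw [hτ j, ← ha, ← hb, ← ht]
    constructor <;> nlinarith
  refine ⟨?_, ?_, ?_⟩
  · intro j j' hjj'
    have h1 := (key j).2
    have h2 := (key j').1
    have hle : c j.succ ≤ c j'.castSucc := by
      apply hmono.monotone
      simp only [Fin.le_def, Fin.val_succ, Fin.coe_castSucc]
      exact hjj'
    linarith
  · intro i j
    rcases le_or_gt (i : ℕ) (j : ℕ) with h | h
    · have hle : c i ≤ c j.castSucc := hmono.monotone (by simpa [Fin.le_def] using h)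
      have := (key j).1
      exact le_abs.mpr (Or.inr (by linarith))
    · have hle : c j.succ ≤ c i := hmono.monotone (by simp [Fin.le_def]; omega)
      have := (key j).2
      exact le_abs.mpr (Or.inl (by linarith))
  · intro i
    have hiff : ∀ j : Fin k, (τ j < c i) ↔ (j : ℕ) < (i : ℕ) := by
      intro j
      constructor
      · intro hτc
        by_contra hnot
        push_neg at hnot
        have hle : c i ≤ c j.castSucc := hmono.monotone (by simpa [Fin.le_def] using hnot)
        have := (key j).1
        linarith
      · intro hji
        have hle : c j.succ ≤ c i := hmono.monotone (by simp [Fin.le_def]; omega)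
        have := (key j).2
        linarith
    rw [Finset.filter_congr (fun j _ => by rw [hiff j])]
    exact aux_card_lt k (i : ℕ) (by omega)
end

section
/- Let μ^k_1, ..., μ^k_l be l lists, each containing at most k labels from a finite label set. Suppose a label y occurs in strictly more than (k/(k+1))·l of the lists. Then y is among the k most frequently occurring labels across the l lists. -/
/-- If a label `y` occurs in strictly more than `(k/(k+1))·l` of `l` lists of size at most
`k` each, then `y` is among the `k` most frequently occurring labels: there do not exist `k`
other labels each occurring in strictly more lists than `y`. -/
theorem topk_of_majority {α : Type*} [Fintype α] [DecidableEq α]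
    (k l : ℕ) (hk : 1 ≤ k) (hl : 1 ≤ l)
    (L : Fin l → Finset α) (hsize : ∀ i, (L i).card ≤ k)
    (y : α)
    (hy : ((k : ℝ) / ((k : ℝ) + 1)) * l <
      ((Finset.univ.filter (fun i : Fin l => y ∈ L i)).card : ℝ)) :
    ¬ ∃ S : Finset α, S.card = k ∧ y ∉ S ∧
      ∀ z ∈ S,
        (Finset.univ.filter (fun i : Fin l => y ∈ L i)).card <
          (Finset.univ.filter (fun i : Fin l => z ∈ L i)).card := by
  rintro ⟨S, hScard, hyS, hS⟩
  set cnt : α → ℕ := fun z => (Finset.univ.filter (fun i : Fin l => z ∈ L i)).card with hcnt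
  have hTcard : (insert y S).card = k + 1 := by
    rw [Finset.card_insert_of_notMem hyS, hScard]
  -- natural-number upper bound on the total count
  have hsum : ∑ z ∈ insert y S, cnt z ≤ l * k := by
    have heq : ∑ z ∈ insert y S, cnt z
        = ∑ i : Fin l, ((insert y S).filter (fun z => z ∈ L i)).card := by
      simp only [hcnt, Finset.card_filter]
      rw [Finset.sum_comm]
    rw [heq]
    calc ∑ i : Fin l, ((insert y S).filter (fun z => z ∈ L i)).card
        ≤ ∑ i : Fin l, (L i).card := by
          apply Finset.sum_le_sum
          intro i _
          apply Finset.card_le_card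
          intro z hz
          exact (Finset.mem_filter.mp hz).2
      _ ≤ ∑ _i : Fin l, k := Finset.sum_le_sum (fun i _ => hsize i)
      _ = l * k := by simp [mul_comm]
  -- real lower bound on the total count
  have hlow : ∀ z ∈ insert y S, ((k : ℝ) / ((k : ℝ) + 1)) * l < (cnt z : ℝ) := by
    intro z hz
    rcases Finset.mem_insert.mp hz with rfl | hz
    · exact hy
    · exact lt_trans hy (by exact_mod_cast hS z hz)
  have hbig : ((insert y S).card : ℝ) * (((k : ℝ) / ((k : ℝ) + 1)) * l)
      < ∑ z ∈ insert y S, (cnt z : ℝ) := by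
    have hne : (insert y S).Nonempty := Finset.insert_nonempty _ _
    have := Finset.sum_lt_sum_of_nonempty hne hlow
    simpa [Finset.sum_const, nsmul_eq_mul] using this
  have hkpos : (0 : ℝ) < (k : ℝ) + 1 := by positivity
  have hcalc : ((insert y S).card : ℝ) * (((k : ℝ) / ((k : ℝ) + 1)) * l)
      = (k : ℝ) * l := by
    rw [hTcard]
    push_cast
    field_simp
  have hsumR : (∑ z ∈ insert y S, (cnt z : ℝ)) ≤ (k : ℝ) * l := by
    rw [← Nat.cast_sum]
    calc ((∑ z ∈ insert y S, cnt z : ℕ) : ℝ) ≤ ((l * k : ℕ) : ℝ) := by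
          exact_mod_cast hsum
      _ = (k : ℝ) * l := by push_cast; ring
  rw [hcalc] at hbig
  exact absurd hsumR (not_le.mpr hbig)
end

section
/- Let H ⊆ [0,1]^X have (γ,k)-fat-shattering dimension at least d, and let α ≤ γ. Define the discretized class H^α = {x ↦ α⌊h(x)/α⌋ : h ∈ H}. Then H^α has (max(α, γ−α), k)-fat-shattering dimension at least d. -/
/-- `H` `(γ,k)`-fat-shatters the sequence `x : Fin d → X`. -/
def FatShatters {X : Type*} (H : Set (X → ℝ)) (γ : ℝ) (k : ℕ)
    {d : ℕ} (x : Fin d → X) : Prop :=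
  ∃ c : Fin d → ℕ → ℝ,
    (∀ i, ∀ j, 1 ≤ j → j ≤ k → c i j ∈ Set.Icc (0 : ℝ) 1) ∧
    (∀ i, ∀ j, 1 ≤ j → j + 1 ≤ k → c i j + 2 * γ ≤ c i (j + 1)) ∧
    (∀ b : Fin d → ℕ, (∀ i, b i ≤ k) → ∃ h ∈ H, ∀ i,
      (b i = 0 → h (x i) ≤ c i 1 - γ) ∧
      (1 ≤ b i → b i < k → c i (b i) + γ ≤ h (x i) ∧ h (x i) ≤ c i (b i + 1) - γ) ∧
      (b i = k → c i k + γ ≤ h (x i)))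


lemma Q_le {α : ℝ} (hα0 : 0 < α) (a : ℝ) : α * (⌊a / α⌋ : ℤ) ≤ a := by
  have h1 := Int.floor_le (a / α)
  have h2 : α * (a / α) = a := by field_simp
  nlinarith

lemma Q_gt {α : ℝ} (hα0 : 0 < α) (a : ℝ) : a - α < α * (⌊a / α⌋ : ℤ) := by
  have h1 := Int.lt_floor_add_one (a / α)
  have h2 : α * (a / α) = a := by field_simp
  nlinarith

lemma Q_mono {α : ℝ} (hα0 : 0 < α) {a b : ℝ} (hab : a ≤ b) :
    α * (⌊a / α⌋ : ℤ) ≤ α * (⌊b / α⌋ : ℤ) := by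
  have h1 : ⌊a / α⌋ ≤ ⌊b / α⌋ := Int.floor_le_floor (by gcongr)
  have h2 : ((⌊a / α⌋ : ℤ) : ℝ) ≤ ((⌊b / α⌋ : ℤ) : ℝ) := by exact_mod_cast h1
  nlinarith

lemma Q_add_self {α : ℝ} (hα0 : 0 < α) (a : ℝ) :
    α * (⌊(a + α) / α⌋ : ℤ) = α * (⌊a / α⌋ : ℤ) + α := by
  have h : (a + α) / α = a / α + 1 := by field_simp
  rw [h, Int.floor_add_one]
  push_cast
  ring

lemma Q_upper {α γ : ℝ} (hα0 : 0 < α) (hαγ : α ≤ γ) {h c : ℝ} (hle : h ≤ c - γ) :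
    α * (⌊h / α⌋ : ℤ) ≤ α * (⌊c / α⌋ : ℤ) - max α (γ - α) := by
  have hA : α * (⌊h / α⌋ : ℤ) + α ≤ α * (⌊c / α⌋ : ℤ) := by
    have h1 : α * (⌊h / α⌋ : ℤ) + α = α * (⌊(h + α) / α⌋ : ℤ) := (Q_add_self hα0 h).symm
    rw [h1]; exact Q_mono hα0 (by linarith)
  have hB : α * (⌊h / α⌋ : ℤ) + (γ - α) ≤ α * (⌊c / α⌋ : ℤ) := by
    have h1 := Q_le hα0 h
    have h2 := Q_gt hα0 c
    linarith
  rcases le_total α (γ - α) with hm | hm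
  · rw [max_eq_right hm]; linarith
  · rw [max_eq_left hm]; linarith

lemma Q_lower {α γ : ℝ} (hα0 : 0 < α) (hαγ : α ≤ γ) {h c : ℝ} (hle : c + γ ≤ h) :
    α * (⌊c / α⌋ : ℤ) + max α (γ - α) ≤ α * (⌊h / α⌋ : ℤ) := by
  have hA : α * (⌊c / α⌋ : ℤ) + α ≤ α * (⌊h / α⌋ : ℤ) := by
    have h1 : α * (⌊c / α⌋ : ℤ) + α = α * (⌊(c + α) / α⌋ : ℤ) := (Q_add_self hα0 c).symm
    rw [h1]; exact Q_mono hα0 (by linarith)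
  have hB : α * (⌊c / α⌋ : ℤ) + (γ - α) ≤ α * (⌊h / α⌋ : ℤ) := by
    have h1 := Q_le hα0 c
    have h2 := Q_gt hα0 h
    linarith
  rcases le_total α (γ - α) with hm | hm
  · rw [max_eq_right hm]; linarith
  · rw [max_eq_left hm]; linarith

lemma Q_gap {α γ : ℝ} (hα0 : 0 < α) (hαγ : α ≤ γ) {a b : ℝ} (hle : a + 2 * γ ≤ b) :
    α * (⌊a / α⌋ : ℤ) + 2 * max α (γ - α) ≤ α * (⌊b / α⌋ : ℤ) := by
  have hA : α * (⌊a / α⌋ : ℤ) + 2 * α ≤ α * (⌊b / α⌋ : ℤ) := by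
    have h1 : α * (⌊(a + α + α) / α⌋ : ℤ) = α * (⌊a / α⌋ : ℤ) + 2 * α := by
      rw [Q_add_self hα0, Q_add_self hα0]; ring
    have h2 : α * (⌊(a + α + α) / α⌋ : ℤ) ≤ α * (⌊b / α⌋ : ℤ) :=
      Q_mono hα0 (by linarith)
    linarith
  have hB : α * (⌊a / α⌋ : ℤ) + 2 * (γ - α) ≤ α * (⌊b / α⌋ : ℤ) := by
    have h1 := Q_le hα0 a
    have h2 := Q_gt hα0 b
    linarith
  rcases le_total α (γ - α) with hm | hm
  · rw [max_eq_right hm]; linarith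
  · rw [max_eq_left hm]; linarith

/-- Discretizing a hypothesis class to the `α`-grid, via `Q_α(t) = α⌊t/α⌋`, preserves
`(γ,k)`-fat-shattering of a given sequence at the reduced width `max(α, γ - α)`. -/
theorem discretized_class_fat_shatters {X : Type*}
    (H : Set (X → ℝ)) (hH : ∀ h ∈ H, ∀ x, h x ∈ Set.Icc (0 : ℝ) 1)
    (γ : ℝ) (hγ : γ ∈ Set.Ioo (0 : ℝ) 1) (k : ℕ) (hk : 1 ≤ k)
    (α : ℝ) (hα0 : 0 < α) (hαγ : α ≤ γ)
    (d : ℕ) (hshatter : ∃ x : Fin d → X, FatShatters H γ k x) :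
    ∃ x : Fin d → X,
      FatShatters ((fun h : X → ℝ => fun a => α * (⌊h a / α⌋ : ℤ)) '' H)
        (max α (γ - α)) k x := by
  obtain ⟨x, c, hc1, hc2, hc3⟩ := hshatter
  refine ⟨x, fun i j => α * (⌊c i j / α⌋ : ℤ), ?_, ?_, ?_⟩
  · intro i j hj1 hjk
    obtain ⟨h0, h1⟩ := hc1 i j hj1 hjk
    constructor
    · have : (0 : ℤ) ≤ ⌊c i j / α⌋ := Int.floor_nonneg.2 (by positivity)
      have : ((0 : ℤ) : ℝ) ≤ ((⌊c i j / α⌋ : ℤ) : ℝ) := by exact_mod_cast this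
      nlinarith
    · exact le_trans (Q_le hα0 _) h1
  · intro i j hj1 hjk
    exact Q_gap hα0 hαγ (hc2 i j hj1 hjk)
  · intro b hb
    obtain ⟨h, hmem, hprop⟩ := hc3 b hb
    refine ⟨fun a => α * (⌊h a / α⌋ : ℤ), ⟨h, hmem, rfl⟩, fun i => ?_⟩
    obtain ⟨p0, pm, pk⟩ := hprop i
    refine ⟨fun h0 => Q_upper hα0 hαγ (p0 h0), fun h1 h2 => ?_, fun hbk => Q_lower hα0 hαγ (pk hbk)⟩
    obtain ⟨plo, phi⟩ := pm h1 h2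
    exact ⟨Q_lower hα0 hαγ plo, Q_upper hα0 hαγ phi⟩
end
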